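/- arXiv:1409.7023 — 4 statements merged into one kernel-verified Lean document; each statement's English description precedes it below -/
import Mathlib

section
/- Let g(t) = (at+b)/(ct+d) be a Möbius transformation with ad − bc = 1 and c ≠ 0, and let x < y be real numbers such that the pole −d/c satisfies −d/c < x. Then for any t with x < t < y one has |x−t|/|y−t| < |g(x)−g(t)|/|g(y)−g(t)| < (|y+d/c|²/|x+d/c|²) · (|x−t|/|y−t|). -/
/-! Since `ad - bc = 1`, `g p - g q = (p - q) / ((cp + d)(cq + d))`, so the distortion ratio
`(g x - g t) / (g y - g t)` is `(x - t) / (y - t)` times `r = (y + d/c) / (x + d/c)`.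
As the pole lies to the left of `x < y`, `r > 1`, and `q < r q < r² q` for
`q = |x - t| / |y - t|`. -/

section Mobius

variable {a b c d : ℝ}

theorem mobius_sub_mobius (hdet : a * d - b * c = 1) {p q : ℝ}
    (hp : c * p + d ≠ 0) (hq : c * q + d ≠ 0) :
    (a * p + b) / (c * p + d) - (a * q + b) / (c * q + d) =
      (p - q) / ((c * p + d) * (c * q + d)) := by
  rw [div_sub_div _ _ hp hq]
  congr 1
  linear_combination (p - q) * hdet

theorem mobius_sub_div_mobius_sub (hdet : a * d - b * c = 1) {x y t : ℝ}
    (hx : c * x + d ≠ 0) (hy : c * y + d ≠ 0) (ht : c * t + d ≠ 0) :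
    ((a * x + b) / (c * x + d) - (a * t + b) / (c * t + d)) /
        ((a * y + b) / (c * y + d) - (a * t + b) / (c * t + d)) =
      (x - t) / (y - t) * ((c * y + d) / (c * x + d)) := by
  rw [mobius_sub_mobius hdet hx ht, mobius_sub_mobius hdet hy ht]
  rcases eq_or_ne (y - t) 0 with hyt | hyt
  · simp [hyt]
  · rw [div_div_div_eq, div_mul_div_comm, div_eq_div_iff (by positivity) (by positivity)]
    ring

theorem mul_add_eq_mul_add_div (hc : c ≠ 0) (u : ℝ) : c * u + d = c * (u + d / c) := by
  field_simp

end Mobius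

/-- Let `g(t) = (a t + b)/(c t + d)` be a Möbius transformation with
`a d − b c = 1` and `c ≠ 0`, and let `x < y` be reals with the pole `−d/c < x`.
Then for any `t` with `x < t < y`,
`|x−t|/|y−t| < |g(x)−g(t)|/|g(y)−g(t)| < (|y+d/c|²/|x+d/c|²)·(|x−t|/|y−t|)`. -/
theorem mobius_distortion_pole_left (a b c d x y t : ℝ)
    (hdet : a * d - b * c = 1) (hc : c ≠ 0)
    (hpole : -d / c < x) (hxt : x < t) (hty : t < y) :
    |x - t| / |y - t| <
        |(a * x + b) / (c * x + d) - (a * t + b) / (c * t + d)| /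
          |(a * y + b) / (c * y + d) - (a * t + b) / (c * t + d)| ∧
    |(a * x + b) / (c * x + d) - (a * t + b) / (c * t + d)| /
        |(a * y + b) / (c * y + d) - (a * t + b) / (c * t + d)| <
      (|y + d / c| ^ 2 / |x + d / c| ^ 2) * (|x - t| / |y - t|) := by
  have hx : 0 < x + d / c := by rw [neg_div] at hpole; linarith
  have hy : 0 < y + d / c := by linarith
  have ht : 0 < t + d / c := by linarith
  have hne (u : ℝ) (hu : 0 < u + d / c) : c * u + d ≠ 0 := by
    rw [mul_add_eq_mul_add_div hc]; exact mul_ne_zero hc hu.ne'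
  have hratio : (c * y + d) / (c * x + d) = (y + d / c) / (x + d / c) := by
    rw [mul_add_eq_mul_add_div hc, mul_add_eq_mul_add_div hc, mul_div_mul_left _ _ hc]
  set r := |y + d / c| / |x + d / c| with hr_def
  set q := |x - t| / |y - t|
  have hr : 1 < r := by
    rw [hr_def, one_lt_div (abs_pos.2 hx.ne'), abs_of_pos hx, abs_of_pos hy]; linarith
  have hq : 0 < q := div_pos (abs_pos.2 (by linarith)) (abs_pos.2 (by linarith))
  have hdistortion :
      |(a * x + b) / (c * x + d) - (a * t + b) / (c * t + d)| /
        |(a * y + b) / (c * y + d) - (a * t + b) / (c * t + d)| = q * r := by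
    rw [← abs_div, mobius_sub_div_mobius_sub hdet (hne x hx) (hne y hy) (hne t ht), hratio,
      abs_mul, abs_div, abs_div]
  rw [hdistortion, ← div_pow, ← hr_def]
  constructor
  · exact lt_mul_of_one_lt_right hq hr
  · nlinarith [mul_pos (mul_pos hq (sub_pos.2 hr)) (zero_lt_one.trans hr)]
end

section
/- Let W and W' be 2×2 real matrices with columns (v^r, v^l) and (w^r, w^l) respectively, and let A be a 2×2 real matrix with det(A) > 0 such that W' = W·A. Assume all relevant denominators are nonzero. Then Im(w^l)/Im(w^r) = (R·Aᵀ·R) * (Im(v^l)/Im(v^r)), where R = [[0,1],[1,0]] and * denotes the Möbius action. -/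
/-! The second row of `W' = W * A` is the row vector `(Im v^r, Im v^l) * A`. Reading a row
vector `(q, p)` as the point `p / q` of the projective line, right multiplication by `A` is
the Möbius action of `R * A.transpose * R`, the matrix acting on the reversed column `(p, q)`. -/

theorem mobius_div_eq_div {K : Type*} [Field K] (a b c d : K) {p q : K} (hq : q ≠ 0) :
    (a * (p / q) + b) / (c * (p / q) + d) = (a * p + b * q) / (c * p + d * q) := by
  have hnum : a * (p / q) + b = (a * p + b * q) / q := by field_simp
  have hden : c * (p / q) + d = (c * p + d * q) / q := by field_simp
  rw [hnum, hden, div_div_div_cancel_right₀ hq]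

theorem Matrix.flip_mul_transpose_mul_flip {α : Type*} [NonAssocSemiring α]
    (A : Matrix (Fin 2) (Fin 2) α) :
    !![0, 1; 1, 0] * A.transpose * !![0, 1; 1, 0] = !![A 1 1, A 0 1; A 1 0, A 0 0] := by
  ext i j
  fin_cases i <;> fin_cases j <;>
    simp [Matrix.mul_apply, Matrix.vecMul, dotProduct, Fin.sum_univ_two]

theorem Matrix.mul_apply_fin_two {α : Type*} [NonUnitalNonAssocSemiring α]
    (W A : Matrix (Fin 2) (Fin 2) α) (i j : Fin 2) :
    (W * A) i j = W i 0 * A 0 j + W i 1 * A 1 j := by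
  simp [Matrix.mul_apply, Fin.sum_univ_two]

theorem imaginary_part_ratio_mobius_general (W W' A : Matrix (Fin 2) (Fin 2) ℝ)
    (hWA : W' = W * A)
    (h1 : W 1 0 ≠ 0)
    (M : Matrix (Fin 2) (Fin 2) ℝ)
    (hM : M = !![(0 : ℝ), 1; 1, 0] * A.transpose * !![(0 : ℝ), 1; 1, 0]) :
    W' 1 1 / W' 1 0 =
      (M 0 0 * (W 1 1 / W 1 0) + M 0 1) / (M 1 0 * (W 1 1 / W 1 0) + M 1 1) := by
  subst hWA hM
  rw [Matrix.flip_mul_transpose_mul_flip, mobius_div_eq_div _ _ _ _ h1,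
    Matrix.mul_apply_fin_two, Matrix.mul_apply_fin_two]
  simp only [Matrix.of_apply, Matrix.cons_val', Matrix.cons_val_zero, Matrix.cons_val_one,
    Matrix.empty_val', Matrix.cons_val_fin_one]
  ring

/-- Let `W` and `W' = W·A` be `2×2` real matrices with columns
`(v^r, v^l)` and `(w^r, w^l)` respectively (so `Im v^r = W 1 0`, `Im v^l = W 1 1`,
`Im w^r = W' 1 0`, `Im w^l = W' 1 1`), and let `det A > 0`. With `R = [[0,1],[1,0]]`
and `M = R·A.transpose·R`, assuming the relevant denominators are nonzero,
`Im(w^l)/Im(w^r) = (R·A.transpose·R) * (Im(v^l)/Im(v^r))` for the Möbius action. -/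
theorem imaginary_part_ratio_mobius (W W' A : Matrix (Fin 2) (Fin 2) ℝ)
    (hdet : 0 < A.det) (hWA : W' = W * A)
    (h1 : W 1 0 ≠ 0) (h2 : W' 1 0 ≠ 0)
    (M : Matrix (Fin 2) (Fin 2) ℝ)
    (hM : M = !![(0 : ℝ), 1; 1, 0] * A.transpose * !![(0 : ℝ), 1; 1, 0])
    (h3 : M 1 0 * (W 1 1 / W 1 0) + M 1 1 ≠ 0) :
    W' 1 1 / W' 1 0 =
      (M 0 0 * (W 1 1 / W 1 0) + M 0 1) / (M 1 0 * (W 1 1 / W 1 0) + M 1 1) :=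
  imaginary_part_ratio_mobius_general W W' A hWA h1 M hM
end

section
/- Let (K(n))ₙ be a monotone slow subdivision of a Cantor set K ⊂ ℝ. If K admits some slow subdivision satisfying the gap condition, then the monotone slow subdivision (K(n))ₙ also satisfies the gap condition. -/
open Set

/-- A Cantor set in `ℝ`: a nonempty, compact, perfect, totally disconnected subset. -/
def IsCantorSet (K : Set ℝ) : Prop :=
  K.Nonempty ∧ IsCompact K ∧ Perfect K ∧ IsTotallyDisconnected K

/-- A hole of a Cantor set `K`: a bounded connected component `(u,v)` of the complement
of `K` inside `[min K, max K]`; its endpoints lie in `K`. -/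
def IsHole (K : Set ℝ) (u v : ℝ) : Prop :=
  u < v ∧ u ∈ K ∧ v ∈ K ∧ Set.Ioo u v ∩ K = ∅

/-- A slow subdivision of a Cantor set `K`: a decreasing family `level n` of closed
sets, each a finite disjoint union of closed intervals, starting from
`[min K, max K]`, where at step `n` one connected component `[A n, D n]` of `level n`
is split by removing the open hole `(B n, C n)` (leaving the two nonempty closed
intervals `K^L = [A n, B n]` and `K^R = [C n, D n]`), and with `⋂ n, level n = K`. -/
structure SlowSubdivision (K : Set ℝ) where
  A : ℕ → ℝ
  B : ℕ → ℝ
  C : ℕ → ℝ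
  D : ℕ → ℝ
  hAB : ∀ n, A n ≤ B n
  hBC : ∀ n, B n < C n
  hCD : ∀ n, C n ≤ D n
  level : ℕ → Set ℝ
  level_zero : level 0 = Set.Icc (sInf K) (sSup K)
  /-- `[A n, D n]` is a connected component of `level n`. -/
  comp : ∀ n, Set.Icc (A n) (D n) = connectedComponentIn (level n) (A n)
  level_succ : ∀ n, level (n + 1) = level n \ Set.Ioo (B n) (C n)
  inter_eq : ⋂ n, level n = K

/-- The gap condition: each removed hole is strictly shorter than both adjacent
remaining closed intervals. -/
def SlowSubdivision.GapCondition {K : Set ℝ} (s : SlowSubdivision K) : Prop :=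
  ∀ n, s.C n - s.B n < s.B n - s.A n ∧ s.C n - s.B n < s.D n - s.C n

/-- A slow subdivision is monotone if the removed holes are ordered by
non-increasing length. -/
def SlowSubdivision.IsMonotone {K : Set ℝ} (s : SlowSubdivision K) : Prop :=
  ∀ n, s.C (n + 1) - s.B (n + 1) ≤ s.C n - s.B n

namespace SlowSubdivision

variable {K : Set ℝ} (s : SlowSubdivision K)

lemma hAD (n : ℕ) : s.A n ≤ s.D n :=
  (s.hAB n).trans ((s.hBC n).le.trans (s.hCD n))

lemma level_anti {m n : ℕ} (h : m ≤ n) : s.level n ⊆ s.level m := by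
  induction n with
  | zero => simp_all
  | succ n ih =>
    rcases Nat.lt_or_ge m (n + 1) with h' | h'
    · rw [s.level_succ n]
      exact diff_subset.trans (ih (Nat.lt_succ_iff.mp h'))
    · have : m = n + 1 := le_antisymm h h'
      subst this; exact fun x hx => hx

lemma Icc_subset_level (n : ℕ) : Icc (s.A n) (s.D n) ⊆ s.level n := by
  rw [s.comp n]; exact connectedComponentIn_subset _ _

lemma A_mem_level (n : ℕ) : s.A n ∈ s.level n :=
  s.Icc_subset_level n ⟨le_refl _, s.hAD n⟩

lemma D_mem_level (n : ℕ) : s.D n ∈ s.level n :=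
  s.Icc_subset_level n ⟨s.hAD n, le_refl _⟩

lemma hole_subset_Icc (n : ℕ) : Ioo (s.B n) (s.C n) ⊆ Icc (s.A n) (s.D n) :=
  fun x hx => ⟨(s.hAB n).trans hx.1.le, hx.2.le.trans (s.hCD n)⟩

lemma hole_subset_level (n : ℕ) : Ioo (s.B n) (s.C n) ⊆ s.level n :=
  (s.hole_subset_Icc n).trans (s.Icc_subset_level n)

lemma level_disjoint_hole {n m : ℕ} (h : n < m) :
    ∀ x ∈ s.level m, x ∉ Ioo (s.B n) (s.C n) := by
  intro x hx
  have hx' : x ∈ s.level (n + 1) := s.level_anti h hx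
  rw [s.level_succ n] at hx'
  exact hx'.2

lemma K_subset_level (n : ℕ) : K ⊆ s.level n := by
  intro x hx
  have hx' : x ∈ ⋂ n, s.level n := by rw [s.inter_eq]; exact hx
  exact mem_iInter.mp hx' n

lemma hole_disjoint_K (n : ℕ) : ∀ x ∈ Ioo (s.B n) (s.C n), x ∉ K := fun x hx hxK =>
  s.level_disjoint_hole (Nat.lt_succ_self n) x (s.K_subset_level (n + 1) hxK) hx

lemma holes_disjoint {n k : ℕ} (h : n < k) {x : ℝ}
    (hx : x ∈ Ioo (s.B n) (s.C n)) : x ∉ Ioo (s.B k) (s.C k) := fun hx' =>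
  s.level_disjoint_hole h x (s.hole_subset_level k hx') hx

lemma level_subset_Icc (n : ℕ) : s.level n ⊆ Icc (sInf K) (sSup K) := by
  rw [← s.level_zero]; exact s.level_anti (Nat.zero_le n)

lemma mem_level_of (n : ℕ) {x : ℝ} (hx : x ∈ Icc (sInf K) (sSup K))
    (h : ∀ k < n, x ∉ Ioo (s.B k) (s.C k)) : x ∈ s.level n := by
  induction n with
  | zero => rwa [s.level_zero]
  | succ n ih =>
    rw [s.level_succ n]
    exact ⟨ih (fun k hk => h k (hk.trans (Nat.lt_succ_self n))), h n (Nat.lt_succ_self n)⟩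

lemma exists_hole_of_notMem_level {n : ℕ} {x : ℝ} (hx : x ∈ Icc (sInf K) (sSup K))
    (h : x ∉ s.level n) : ∃ k < n, x ∈ Ioo (s.B k) (s.C k) := by
  by_contra hc
  push_neg at hc
  exact h (s.mem_level_of n hx hc)

lemma mem_K_iff {x : ℝ} : x ∈ K ↔ ∀ n, x ∈ s.level n := by
  constructor
  · exact fun hx n => s.K_subset_level n hx
  · intro hx
    have : x ∈ ⋂ n, s.level n := mem_iInter.mpr hx
    rwa [s.inter_eq] at this

lemma B_mem_Icc (n : ℕ) : s.B n ∈ Icc (s.A n) (s.D n) :=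
  ⟨s.hAB n, (s.hBC n).le.trans (s.hCD n)⟩

lemma C_mem_Icc (n : ℕ) : s.C n ∈ Icc (s.A n) (s.D n) :=
  ⟨(s.hAB n).trans (s.hBC n).le, s.hCD n⟩

lemma B_mem_K (n : ℕ) : s.B n ∈ K := by
  rw [s.mem_K_iff]
  intro m
  have hBlev : s.B n ∈ s.level n := s.Icc_subset_level n (s.B_mem_Icc n)
  rcases le_or_gt m n with h | h
  · exact s.level_anti h hBlev
  · refine s.mem_level_of m (s.level_subset_Icc n hBlev) ?_
    intro k _ hmem
    rcases lt_trichotomy k n with h' | h' | h'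
    · exact s.level_disjoint_hole h' _ hBlev hmem
    · subst h'; exact lt_irrefl _ hmem.1
    · have h1 : s.B n < min (s.C n) (s.C k) := lt_min (s.hBC n) hmem.2
      have h2 := min_le_left (s.C n) (s.C k)
      have h3 := min_le_right (s.C n) (s.C k)
      exact s.holes_disjoint h'
        (x := (s.B n + min (s.C n) (s.C k)) / 2)
        ⟨by linarith, by linarith⟩ ⟨by linarith [hmem.1], by linarith⟩

lemma C_mem_K (n : ℕ) : s.C n ∈ K := by
  rw [s.mem_K_iff]
  intro m
  have hClev : s.C n ∈ s.level n := s.Icc_subset_level n (s.C_mem_Icc n)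
  rcases le_or_gt m n with h | h
  · exact s.level_anti h hClev
  · refine s.mem_level_of m (s.level_subset_Icc n hClev) ?_
    intro k _ hmem
    rcases lt_trichotomy k n with h' | h' | h'
    · exact s.level_disjoint_hole h' _ hClev hmem
    · subst h'; exact lt_irrefl _ hmem.2
    · have h1 : max (s.B n) (s.B k) < s.C n := max_lt (s.hBC n) hmem.1
      have h2 := le_max_left (s.B n) (s.B k)
      have h3 := le_max_right (s.B n) (s.B k)
      exact s.holes_disjoint h'
        (x := (max (s.B n) (s.B k) + s.C n) / 2)
        ⟨by linarith, by linarith⟩ ⟨by linarith, by linarith [hmem.2]⟩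

lemma A_mem_K (n : ℕ) : s.A n ∈ K := by
  rw [s.mem_K_iff]
  intro m
  rcases le_or_gt m n with h | h
  · exact s.level_anti h (s.A_mem_level n)
  · refine s.mem_level_of m (s.level_subset_Icc n (s.A_mem_level n)) ?_
    intro k _ hmem
    rcases lt_or_ge k n with h' | h'
    · exact s.level_disjoint_hole h' _ (s.A_mem_level n) hmem
    · have hsub : Ioo (s.B k) (s.C k) ⊆ s.level n :=
        (s.hole_subset_level k).trans (s.level_anti h')
      have hcc : Ioo (s.B k) (s.C k) ⊆ Icc (s.A n) (s.D n) := by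
        rw [s.comp n]
        exact isPreconnected_Ioo.subset_connectedComponentIn hmem hsub
      have hy : (s.B k + s.A n) / 2 ∈ Ioo (s.B k) (s.C k) :=
        ⟨by linarith [hmem.1], by linarith [hmem.1, hmem.2]⟩
      have := (hcc hy).1
      linarith [hmem.1]

lemma comp_D (n : ℕ) :
    Icc (s.A n) (s.D n) = connectedComponentIn (s.level n) (s.D n) := by
  have hD : s.D n ∈ connectedComponentIn (s.level n) (s.A n) := by
    rw [← s.comp n]; exact ⟨s.hAD n, le_refl _⟩
  rw [s.comp n, connectedComponentIn_eq hD]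

lemma D_mem_K (n : ℕ) : s.D n ∈ K := by
  rw [s.mem_K_iff]
  intro m
  rcases le_or_gt m n with h | h
  · exact s.level_anti h (s.D_mem_level n)
  · refine s.mem_level_of m (s.level_subset_Icc n (s.D_mem_level n)) ?_
    intro k _ hmem
    rcases lt_or_ge k n with h' | h'
    · exact s.level_disjoint_hole h' _ (s.D_mem_level n) hmem
    · have hsub : Ioo (s.B k) (s.C k) ⊆ s.level n :=
        (s.hole_subset_level k).trans (s.level_anti h')
      have hcc : Ioo (s.B k) (s.C k) ⊆ Icc (s.A n) (s.D n) := by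
        rw [s.comp_D n]
        exact isPreconnected_Ioo.subset_connectedComponentIn hmem hsub
      have hy : (s.D n + s.C k) / 2 ∈ Ioo (s.B k) (s.C k) :=
        ⟨by linarith [hmem.1, hmem.2], by linarith [hmem.2]⟩
      have := (hcc hy).2
      linarith [hmem.2]

/-- Every hole removed by `s` is also removed (at some step) by any other slow
subdivision `t`. -/
lemma exists_eq_hole (t : SlowSubdivision K) (n : ℕ) :
    ∃ m, t.B m = s.B n ∧ t.C m = s.C n := by
  set x := (s.B n + s.C n) / 2 with hxdef
  have hx : x ∈ Ioo (s.B n) (s.C n) := ⟨by simp only [hxdef]; linarith [s.hBC n],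
    by simp only [hxdef]; linarith [s.hBC n]⟩
  have hxK : x ∉ K := s.hole_disjoint_K n x hx
  have hxI : x ∈ Icc (sInf K) (sSup K) := s.level_subset_Icc n (s.hole_subset_level n hx)
  have hnl : ¬ ∀ m, x ∈ t.level m := by rw [← t.mem_K_iff]; exact hxK
  push_neg at hnl
  obtain ⟨m0, hm0⟩ := hnl
  obtain ⟨m, _, hxm⟩ := t.exists_hole_of_notMem_level hxI hm0
  refine ⟨m, ?_, ?_⟩
  · have h1 : t.B m ≤ s.B n := by
      by_contra hc; push_neg at hc
      exact s.hole_disjoint_K n _ ⟨hc, hxm.1.trans hx.2⟩ (t.B_mem_K m)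
    have h2 : s.B n ≤ t.B m := by
      by_contra hc; push_neg at hc
      exact t.hole_disjoint_K m _ ⟨hc, hx.1.trans hxm.2⟩ (s.B_mem_K n)
    exact le_antisymm h1 h2
  · have h1 : t.C m ≤ s.C n := by
      by_contra hc; push_neg at hc
      exact t.hole_disjoint_K m _ ⟨hxm.1.trans hx.2, hc⟩ (s.C_mem_K n)
    have h2 : s.C n ≤ t.C m := by
      by_contra hc; push_neg at hc
      exact s.hole_disjoint_K n _ ⟨hx.1.trans hxm.2, hc⟩ (t.C_mem_K m)
    exact le_antisymm h1 h2

/-- If the left endpoint of the component split at step `n` is not `sInf K`, then it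
is the right endpoint of a hole removed earlier. -/
lemma exists_left_hole (n : ℕ) (h : sInf K < s.A n) : ∃ k < n, s.C k = s.A n := by
  classical
  set G : Finset ℝ :=
    insert (sInf K) (((Finset.range n).filter (fun k => s.C k < s.A n)).image s.C) with hG
  have hGne : G.Nonempty := Finset.insert_nonempty _ _
  set a := G.max' hGne with ha
  have ha_lt : a < s.A n := by
    rw [ha]
    apply (Finset.max'_lt_iff G hGne).mpr
    intro y hy
    rcases Finset.mem_insert.mp hy with h' | h'
    · rwa [h']
    · obtain ⟨k, hk, rfl⟩ := Finset.mem_image.mp h'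
      exact (Finset.mem_filter.mp hk).2
  have ha_inf : sInf K ≤ a := Finset.le_max' _ _ (Finset.mem_insert_self _ _)
  have hxex : ∃ x, a < x ∧ x < s.A n ∧ x ∉ s.level n := by
    by_contra hc; push_neg at hc
    set x := (a + s.A n) / 2 with hxdef
    have hx1 : a < x := by rw [hxdef]; linarith
    have hx2 : x < s.A n := by rw [hxdef]; linarith
    have hIcc : Icc x (s.A n) ⊆ s.level n := by
      intro y hy
      rcases eq_or_lt_of_le hy.2 with h' | h'
      · rw [h']; exact s.A_mem_level n
      · exact hc y (lt_of_lt_of_le hx1 hy.1) h'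
    have hsubcc : Icc x (s.A n) ⊆ Icc (s.A n) (s.D n) := by
      rw [s.comp n]
      exact isPreconnected_Icc.subset_connectedComponentIn ⟨hx2.le, le_refl _⟩ hIcc
    have := (hsubcc ⟨le_refl _, hx2.le⟩).1
    linarith
  obtain ⟨x, hax, hxA, hxl⟩ := hxex
  have hxI : x ∈ Icc (sInf K) (sSup K) :=
    ⟨ha_inf.trans hax.le, hxA.le.trans (s.level_subset_Icc n (s.A_mem_level n)).2⟩
  obtain ⟨k, hk, hxk⟩ := s.exists_hole_of_notMem_level hxI hxl
  have hCk_le : s.C k ≤ s.A n := by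
    by_contra hc; push_neg at hc
    exact s.level_disjoint_hole hk _ (s.A_mem_level n) ⟨hxk.1.trans hxA, hc⟩
  have hnotlt : ¬ s.C k < s.A n := by
    intro hlt
    have hmem : s.C k ∈ G := Finset.mem_insert_of_mem
      (Finset.mem_image.mpr ⟨k, Finset.mem_filter.mpr ⟨Finset.mem_range.mpr hk, hlt⟩, rfl⟩)
    have := Finset.le_max' G _ hmem
    rw [← ha] at this
    linarith [hxk.2]
  exact ⟨k, hk, le_antisymm hCk_le (not_lt.mp hnotlt)⟩

/-- If the right endpoint of the component split at step `n` is not `sSup K`, then it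
is the left endpoint of a hole removed earlier. -/
lemma exists_right_hole (n : ℕ) (h : s.D n < sSup K) : ∃ k < n, s.B k = s.D n := by
  classical
  set G : Finset ℝ :=
    insert (sSup K) (((Finset.range n).filter (fun k => s.D n < s.B k)).image s.B) with hG
  have hGne : G.Nonempty := Finset.insert_nonempty _ _
  set a := G.min' hGne with ha
  have ha_gt : s.D n < a := by
    rw [ha]
    apply (Finset.lt_min'_iff G hGne).mpr
    intro y hy
    rcases Finset.mem_insert.mp hy with h' | h'
    · rwa [h']
    · obtain ⟨k, hk, rfl⟩ := Finset.mem_image.mp h'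
      exact (Finset.mem_filter.mp hk).2
  have ha_sup : a ≤ sSup K := Finset.min'_le _ _ (Finset.mem_insert_self _ _)
  have hxex : ∃ x, s.D n < x ∧ x < a ∧ x ∉ s.level n := by
    by_contra hc; push_neg at hc
    set x := (s.D n + a) / 2 with hxdef
    have hx1 : s.D n < x := by rw [hxdef]; linarith
    have hx2 : x < a := by rw [hxdef]; linarith
    have hIcc : Icc (s.D n) x ⊆ s.level n := by
      intro y hy
      rcases eq_or_lt_of_le hy.1 with h' | h'
      · rw [← h']; exact s.D_mem_level n
      · exact hc y h' (lt_of_le_of_lt hy.2 hx2)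
    have hsubcc : Icc (s.D n) x ⊆ Icc (s.A n) (s.D n) := by
      rw [s.comp_D n]
      exact isPreconnected_Icc.subset_connectedComponentIn ⟨le_refl _, hx1.le⟩ hIcc
    have := (hsubcc ⟨hx1.le, le_refl _⟩).2
    linarith
  obtain ⟨x, hDx, hxa, hxl⟩ := hxex
  have hxI : x ∈ Icc (sInf K) (sSup K) :=
    ⟨(s.level_subset_Icc n (s.D_mem_level n)).1.trans hDx.le, hxa.le.trans ha_sup⟩
  obtain ⟨k, hk, hxk⟩ := s.exists_hole_of_notMem_level hxI hxl
  have hBk_ge : s.D n ≤ s.B k := by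
    by_contra hc; push_neg at hc
    exact s.level_disjoint_hole hk _ (s.D_mem_level n) ⟨hc, hDx.trans hxk.2⟩
  have hnotlt : ¬ s.D n < s.B k := by
    intro hlt
    have hmem : s.B k ∈ G := Finset.mem_insert_of_mem
      (Finset.mem_image.mpr ⟨k, Finset.mem_filter.mpr ⟨Finset.mem_range.mpr hk, hlt⟩, rfl⟩)
    have := Finset.min'_le G _ hmem
    rw [← ha] at this
    linarith [hxk.1]
  exact ⟨k, hk, le_antisymm (not_lt.mp hnotlt) hBk_ge⟩

end SlowSubdivision

/-- Let `(K(n))ₙ` be a monotone slow subdivision of a Cantor set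
`K ⊂ ℝ`. If `K` admits some slow subdivision satisfying the gap condition, then the
monotone slow subdivision also satisfies the gap condition. -/
theorem monotone_slow_subdivision_gap (K : Set ℝ) (hK : IsCantorSet K)
    (s : SlowSubdivision K) (hmono : s.IsMonotone)
    (h : ∃ t : SlowSubdivision K, t.GapCondition) :
    s.GapCondition := by
  obtain ⟨t, ht⟩ := h
  have hanti : Antitone (fun n => s.C n - s.B n) := antitone_nat_of_succ_le hmono
  intro n
  obtain ⟨m, hmB, hmC⟩ := s.exists_eq_hole t n
  constructor
  · -- left inequality
    have gapL := (ht m).1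
    rw [hmB, hmC] at gapL
    rcases le_or_gt (s.A n) (t.A m) with hA | hA
    · linarith
    · have hInf : sInf K ≤ t.A m := (t.level_subset_Icc m (t.A_mem_level m)).1
      obtain ⟨k, hk, hCk⟩ := s.exists_left_hole n (lt_of_le_of_lt hInf hA)
      obtain ⟨m', hm'B, hm'C⟩ := s.exists_eq_hole t k
      have hBkAn : s.B k < s.A n := by rw [← hCk]; exact s.hBC k
      have hAmBk : t.A m ≤ s.B k := by
        by_contra hc; push_neg at hc
        exact s.hole_disjoint_K k _ ⟨hc, by rw [hCk]; exact hA⟩ (t.A_mem_K m)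
      have hAnBn : s.A n ≤ s.B n := s.hAB n
      have hmm' : m < m' := by
        rcases lt_trichotomy m' m with h' | h' | h'
        · exfalso
          have hy : (s.B k + s.A n) / 2 ∈ Ioo (t.B m') (t.C m') := by
            rw [hm'B, hm'C, hCk]; exact ⟨by linarith, by linarith⟩
          have hyl : (s.B k + s.A n) / 2 ∈ t.level m := by
            apply t.Icc_subset_level m
            refine ⟨?_, ?_⟩
            · linarith [hAmBk]
            · have h1 : t.B m ≤ t.D m := (t.hBC m).le.trans (t.hCD m)
              rw [hmB] at h1
              linarith
          exact t.level_disjoint_hole h' _ hyl hy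
        · exfalso
          rw [h', hmB] at hm'B
          linarith
        · exact h'
      have hDm' : t.D m' ≤ s.B n := by
        by_contra hc; push_neg at hc
        have h1 : s.B n < min (s.C n) (t.D m') := lt_min (s.hBC n) hc
        have h2 := min_le_left (s.C n) (t.D m')
        have h3 := min_le_right (s.C n) (t.D m')
        set y := (s.B n + min (s.C n) (t.D m')) / 2 with hydef
        have hyIoo : y ∈ Ioo (t.B m) (t.C m) := by
          rw [hmB, hmC]; exact ⟨by rw [hydef]; linarith, by rw [hydef]; linarith⟩
        have hyIcc : y ∈ Icc (t.A m') (t.D m') := by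
          have hAm' : t.A m' ≤ t.B m' := t.hAB m'
          rw [hm'B] at hAm'
          exact ⟨by rw [hydef]; linarith, by rw [hydef]; linarith⟩
        exact t.level_disjoint_hole hmm' y (t.Icc_subset_level m' hyIcc) hyIoo
      have gapR' := (ht m').2
      rw [hm'B, hm'C] at gapR'
      have hmonok : s.C n - s.B n ≤ s.C k - s.B k := hanti hk.le
      linarith
  · -- right inequality
    have gapR := (ht m).2
    rw [hmB, hmC] at gapR
    rcases le_or_gt (t.D m) (s.D n) with hD | hD
    · linarith
    · have hSup : t.D m ≤ sSup K := (t.level_subset_Icc m (t.D_mem_level m)).2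
      obtain ⟨k, hk, hBk⟩ := s.exists_right_hole n (lt_of_lt_of_le hD hSup)
      obtain ⟨m', hm'B, hm'C⟩ := s.exists_eq_hole t k
      have hDnCk : s.D n < s.C k := by rw [← hBk]; exact s.hBC k
      have hCkDm : s.C k ≤ t.D m := by
        by_contra hc; push_neg at hc
        exact s.hole_disjoint_K k _ ⟨by rw [hBk]; exact hD, hc⟩ (t.D_mem_K m)
      have hCnDn : s.C n ≤ s.D n := s.hCD n
      have hmm' : m < m' := by
        rcases lt_trichotomy m' m with h' | h' | h'
        · exfalso
          have hy : (s.D n + s.C k) / 2 ∈ Ioo (t.B m') (t.C m') := by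
            rw [hm'B, hm'C, hBk]; exact ⟨by linarith, by linarith⟩
          have hyl : (s.D n + s.C k) / 2 ∈ t.level m := by
            apply t.Icc_subset_level m
            refine ⟨?_, ?_⟩
            · have h1 : t.A m ≤ t.B m := t.hAB m
              rw [hmB] at h1
              have h2 : s.B n < s.C n := s.hBC n
              linarith
            · linarith [hCkDm]
          exact t.level_disjoint_hole h' _ hyl hy
        · exfalso
          rw [h', hmB] at hm'B
          have h2 : s.B n < s.C n := s.hBC n
          linarith
        · exact h'
      have hAm' : s.C n ≤ t.A m' := by
        by_contra hc; push_neg at hc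
        have h1 : max (s.B n) (t.A m') < s.C n := max_lt (s.hBC n) hc
        have h2 := le_max_left (s.B n) (t.A m')
        have h3 := le_max_right (s.B n) (t.A m')
        set y := (max (s.B n) (t.A m') + s.C n) / 2 with hydef
        have hyIoo : y ∈ Ioo (t.B m) (t.C m) := by
          rw [hmB, hmC]; exact ⟨by rw [hydef]; linarith, by rw [hydef]; linarith⟩
        have hyIcc : y ∈ Icc (t.A m') (t.D m') := by
          have hBm' : t.B m' ≤ t.D m' := (t.hBC m').le.trans (t.hCD m')
          rw [hm'B, hBk] at hBm'
          exact ⟨by rw [hydef]; linarith, by rw [hydef]; linarith⟩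
        exact t.level_disjoint_hole hmm' y (t.Icc_subset_level m' hyIcc) hyIoo
      have gapL' := (ht m').1
      rw [hm'B, hm'C] at gapL'
      have hmonok : s.C n - s.B n ≤ s.C k - s.B k := hanti hk.le
      linarith
end

section
/- Let θ ∈ ℝ and let v ∈ ℝ² be nonzero. Denote Re_θ(v) and Im_θ(v) the components of the rotation of v by angle θ. If v' is the image of v under an area-preserving linear map g ∈ SL(2,ℝ), and θ', θ'_⊥ are the directions of the images under g of lines in directions θ and θ+π/2, then |Re_θ(v)·Im_θ(v)| equals the area of the parallelogram with diagonal v' and sides parallel to θ' and θ'_⊥, and this area equals |v'|²·|sin(θ'−θ(v'))|·|sin(θ(v')−θ'_⊥)| / |sin(θ'−θ'_⊥)| (where θ(v') is the direction of v'), so that, since 1/|sin(θ'−θ'_⊥)| ≥ 1, it is bounded below by |v'|²·|sin(θ'−θ(v'))|·|sin(θ(v')−θ'_⊥)|. -/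
open Real

/-- Let `θ ∈ ℝ`, let `v ∈ ℝ²` be nonzero, with `Re_θ(v)`, `Im_θ(v)`
the components of the rotation of `v` by `θ`. Let `v' = g v` for `g ∈ SL(2,ℝ)`, and
let `θ'`, `θ'_⊥` be the directions of the `g`-images of lines in directions `θ` and
`θ + π/2` (a direction `η` corresponds to the line spanned by `(sin η, cos η)`), and
`θ(v')` the direction of `v'`. Then `|Re_θ(v)·Im_θ(v)|` equals the area of the
parallelogram with diagonal `v'` and sides parallel to `θ'`, `θ'_⊥`, namely
`|v'|²·|sin(θ'−θ(v'))|·|sin(θ(v')−θ'_⊥)| / |sin(θ'−θ'_⊥)|`, and since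
`1/|sin(θ'−θ'_⊥)| ≥ 1` this area is bounded below by
`|v'|²·|sin(θ'−θ(v'))|·|sin(θ(v')−θ'_⊥)|`. -/
theorem area_parallelogram_bound (θ θ' θperp θv' : ℝ)
    (g : Matrix (Fin 2) (Fin 2) ℝ) (hg : g.det = 1)
    (v : Fin 2 → ℝ) (hv : v ≠ 0)
    (v' : Fin 2 → ℝ) (hv' : v' = g.mulVec v)
    (hθ' : ∃ r : ℝ, r ≠ 0 ∧
      g.mulVec ![Real.sin θ, Real.cos θ] = r • ![Real.sin θ', Real.cos θ'])
    (hθperp : ∃ r : ℝ, r ≠ 0 ∧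
      g.mulVec ![Real.sin (θ + π / 2), Real.cos (θ + π / 2)] =
        r • ![Real.sin θperp, Real.cos θperp])
    (hθv' : ∃ r : ℝ, r ≠ 0 ∧ v' = r • ![Real.sin θv', Real.cos θv'])
    (hnd : Real.sin (θ' - θperp) ≠ 0) :
    |(v 0 * Real.cos θ - v 1 * Real.sin θ) * (v 0 * Real.sin θ + v 1 * Real.cos θ)| =
        ((v' 0) ^ 2 + (v' 1) ^ 2) * |Real.sin (θ' - θv')| * |Real.sin (θv' - θperp)| /
          |Real.sin (θ' - θperp)| ∧
      ((v' 0) ^ 2 + (v' 1) ^ 2) * |Real.sin (θ' - θv')| * |Real.sin (θv' - θperp)| ≤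
        |(v 0 * Real.cos θ - v 1 * Real.sin θ) * (v 0 * Real.sin θ + v 1 * Real.cos θ)| := by
  obtain ⟨r1, hr1, h1⟩ := hθ'
  obtain ⟨r2, hr2, h2⟩ := hθperp
  obtain ⟨r3, hr3, h3⟩ := hθv'
  have h10 := congrFun h1 0
  have h11 := congrFun h1 1
  have h20 := congrFun h2 0
  have h21 := congrFun h2 1
  have h30 := congrFun h3 0
  have h31 := congrFun h3 1
  have hv0 := congrFun hv' 0
  have hv1 := congrFun hv' 1
  simp [Matrix.mulVec, dotProduct, Fin.sum_univ_two, Real.sin_add, Real.cos_add] at h10 h11 h20 h21 h30 h31 hv0 hv1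
  rw [Matrix.det_fin_two] at hg
  set a := g 0 0; set b := g 0 1; set c := g 1 0; set d := g 1 1
  have pyth := Real.sin_sq_add_cos_sq θ
  -- key identities
  have E1 : r1 * r2 * Real.sin (θ' - θperp) = -1 := by
    have h : r1 * r2 * Real.sin (θ' - θperp) =
        (r1 * Real.sin θ') * (r2 * Real.cos θperp) -
          (r1 * Real.cos θ') * (r2 * Real.sin θperp) := by
      rw [Real.sin_sub]; ring
    rw [h, ← h10, ← h11, ← h20, ← h21]
    linear_combination (-(Real.sin θ ^ 2 + Real.cos θ ^ 2)) * hg - pyth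
  have E2 : r1 * r3 * Real.sin (θ' - θv') =
      -(v 0 * Real.cos θ - v 1 * Real.sin θ) := by
    have h : r1 * r3 * Real.sin (θ' - θv') =
        (r1 * Real.sin θ') * (r3 * Real.cos θv') -
          (r1 * Real.cos θ') * (r3 * Real.sin θv') := by
      rw [Real.sin_sub]; ring
    rw [h, ← h10, ← h11, ← h30, ← h31, hv0, hv1]
    linear_combination (Real.sin θ * v 1 - Real.cos θ * v 0) * hg
  have E3 : r2 * r3 * Real.sin (θv' - θperp) =
      -(v 0 * Real.sin θ + v 1 * Real.cos θ) := by
    have h : r2 * r3 * Real.sin (θv' - θperp) =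
        (r3 * Real.sin θv') * (r2 * Real.cos θperp) -
          (r3 * Real.cos θv') * (r2 * Real.sin θperp) := by
      rw [Real.sin_sub]; ring
    rw [h, ← h20, ← h21, ← h30, ← h31, hv0, hv1]
    linear_combination (-(v 0 * Real.sin θ + v 1 * Real.cos θ)) * hg
  have hn2 : v' 0 ^ 2 + v' 1 ^ 2 = r3 ^ 2 := by
    have p := Real.sin_sq_add_cos_sq θv'
    rw [h30, h31]
    linear_combination r3 ^ 2 * p
  have habs : |Real.sin (θ' - θperp)| > 0 := abs_pos.mpr hnd
  have key : |(v 0 * Real.cos θ - v 1 * Real.sin θ) * (v 0 * Real.sin θ + v 1 * Real.cos θ)| =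
      (v' 0 ^ 2 + v' 1 ^ 2) * |Real.sin (θ' - θv')| * |Real.sin (θv' - θperp)| /
        |Real.sin (θ' - θperp)| := by
    rw [eq_div_iff (ne_of_gt habs), hn2]
    have key0 : (v 0 * Real.cos θ - v 1 * Real.sin θ) * (v 0 * Real.sin θ + v 1 * Real.cos θ) *
        Real.sin (θ' - θperp) = -(r3 ^ 2 * Real.sin (θ' - θv') * Real.sin (θv' - θperp)) := by
      linear_combination (r3 ^ 2 * Real.sin (θ' - θv') * Real.sin (θv' - θperp)) * E1 +
        ((v 0 * Real.sin θ + v 1 * Real.cos θ) * Real.sin (θ' - θperp)) * E2 +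
        (-(r1 * r3 * Real.sin (θ' - θv') * Real.sin (θ' - θperp))) * E3
    calc |(v 0 * Real.cos θ - v 1 * Real.sin θ) * (v 0 * Real.sin θ + v 1 * Real.cos θ)| *
          |Real.sin (θ' - θperp)|
        = |(v 0 * Real.cos θ - v 1 * Real.sin θ) * (v 0 * Real.sin θ + v 1 * Real.cos θ) *
            Real.sin (θ' - θperp)| := (abs_mul _ _).symm
      _ = |-(r3 ^ 2 * Real.sin (θ' - θv') * Real.sin (θv' - θperp))| := by rw [key0]
      _ = r3 ^ 2 * |Real.sin (θ' - θv')| * |Real.sin (θv' - θperp)| := by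
            rw [abs_neg, abs_mul, abs_mul, abs_of_nonneg (sq_nonneg r3)]
  refine ⟨key, ?_⟩
  rw [key, le_div_iff₀ habs]
  have hX : 0 ≤ (v' 0 ^ 2 + v' 1 ^ 2) * |Real.sin (θ' - θv')| * |Real.sin (θv' - θperp)| := by
    positivity
  nlinarith [hX, Real.abs_sin_le_one (θ' - θperp), abs_nonneg (Real.sin (θ' - θperp))]
end
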